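/- Let g_N be a taming function with ν = 1. There exists a constant C₀ ≥ 1, depending only on g_N, such that for all smooth ℤ³-periodic divergence-free vector fields u₁, u₂ : ℝ³ → ℝ³, ∫_{[0,1]³} ⟨Δ(u₁ − u₂)(x) − ((u₁·∇)u₁ − (u₂·∇)u₂)(x) − (g_N(|u₁(x)|²)u₁(x) − g_N(|u₂(x)|²)u₂(x)), u₁(x) − u₂(x)⟩ dx ≤ −(1/2)‖u₁ − u₂‖_{H¹}² + C₀ (‖u₂‖_{H¹}‖u₂‖_{H²} + 1) ‖u₁ − u₂‖_{L²}². (This is the local monotonicity estimate ⟨F(u₁) − F(u₂), u₁ − u₂⟩_{H⁰} ≤ −½‖u₁−u₂‖²_{H¹} + C₀(‖u₂‖_{H¹}‖u₂‖_{H²}+1)‖u₁−u₂‖²_{H⁰}.) -/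

import Mathlib

/-!
Write `w = u₁ - u₂`, so that `(u₁·∇)u₁ - (u₂·∇)u₂ = (u₁·∇)w + (w·∇)u₂`. Integrating by parts over
a period (boundary terms cancel by periodicity, and `div u₁ = div w = 0`) turns the left-hand side
into `∫ -|∇w|² + ⟨(w·∇)w, u₂⟩ - ⟨g(|u₁|²)u₁ - g(|u₂|²)u₂, w⟩`. Pointwise,
`2⟨(w·∇)w, u₂⟩ ≤ |∇w|² + |u₂|²|w|²`, while the monotonicity of `g` and `g(r) ≥ r - (N + 1)` give
`2⟨g(|u₁|²)u₁ - g(|u₂|²)u₂, w⟩ ≥ (|u₂|² - N - 1)|w|²`: the taming term absorbs the cubic one. So the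
left-hand side is at most `-½‖w‖²_{H¹} + ½(N + 2)‖w‖²_{L²}`.
-/

open MeasureTheory

noncomputable section

/-- Vector fields on `ℝ³` with values in `ℝ³`. -/
abbrev V3 := Fin 3 → ℝ

/-- `ℤ³`-periodicity: `u (x + k) = u x` for every integer vector `k`. -/
def IsPeriodic (u : V3 → V3) : Prop :=
  ∀ (x : V3) (k : Fin 3 → ℤ), u (x + fun i => (k i : ℝ)) = u x

/-- The `i`-th partial derivative `∂ᵢ u` at `x`. -/
def pd (u : V3 → V3) (i : Fin 3) (x : V3) : V3 :=
  fderiv ℝ u x (Pi.single i 1)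

/-- Divergence-free condition `∑ᵢ ∂ᵢ uⁱ = 0`. -/
def IsDivFree (u : V3 → V3) : Prop :=
  ∀ x : V3, ∑ i : Fin 3, pd u i x i = 0

/-- The Laplacian `Δu = ∑ᵢ ∂ᵢ∂ᵢ u`. -/
def lap (u : V3 → V3) (x : V3) : V3 :=
  ∑ i : Fin 3, fderiv ℝ (pd u i) x (Pi.single i 1)

/-- The convection term `(u·∇)v = ∑ᵢ uⁱ ∂ᵢ v`. -/
def conv (u v : V3 → V3) (x : V3) : V3 :=
  ∑ i : Fin 3, u x i • pd v i x

/-- Euclidean inner product on `ℝ³`. -/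
def dot (a b : V3) : ℝ := ∑ j : Fin 3, a j * b j

/-- Squared Euclidean norm on `ℝ³`. -/
def normSq (a : V3) : ℝ := ∑ j : Fin 3, (a j) ^ 2

/-- The periodicity cell `[0,1]³`. -/
def cube : Set V3 := Set.Icc 0 1

/-- `‖u‖²_{L²} = ∫_{[0,1]³} |u|² dx`. -/
def l2sq (u : V3 → V3) : ℝ := ∫ x in cube, normSq (u x)

/-- `|∇u(x)|² = ∑_{i,j} |∂ᵢ uʲ(x)|²`. -/
def gradSq (u : V3 → V3) (x : V3) : ℝ := ∑ i : Fin 3, normSq (pd u i x)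

/-- `‖u‖²_{H¹} = ∫_{[0,1]³} (|u|² + |∇u|²) dx`. -/
def h1sq (u : V3 → V3) : ℝ := ∫ x in cube, (normSq (u x) + gradSq u x)

/-- `‖u‖²_{H²} = ∫_{[0,1]³} |u - Δu|² dx`. -/
def h2sq (u : V3 → V3) : ℝ := ∫ x in cube, normSq (u x - lap u x)

/-- A taming function with `ν = 1`: a smooth `g : ℝ → ℝ` vanishing on `(-∞, N]`,
equal to `r - N` on `[N+1, ∞)`, with derivative between `0` and some `C₀ > 0`. -/
def IsTaming (N : ℝ) (g : ℝ → ℝ) : Prop :=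
  ContDiff ℝ (⊤ : ℕ∞) g ∧ (∀ r ≤ N, g r = 0) ∧ (∀ r, N + 1 ≤ r → g r = r - N) ∧
    ∃ C₀ > 0, ∀ r, 0 ≤ deriv g r ∧ deriv g r ≤ C₀

end

open Set

noncomputable def divergence {n : ℕ} {E : Type*} [NormedAddCommGroup E] [NormedSpace ℝ E]
    (Φ : Fin n → (Fin n → ℝ) → E) (x : Fin n → ℝ) : E :=
  ∑ i, fderiv ℝ (Φ i) x (Pi.single i 1)

section Divergence

variable {n : ℕ} {E : Type*} [NormedAddCommGroup E] [NormedSpace ℝ E]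
  {Φ Ψ : Fin n → (Fin n → ℝ) → E}

theorem continuous_divergence (hΦ : ∀ i, ContDiff ℝ 1 (Φ i)) : Continuous (divergence Φ) :=
  continuous_finsetSum _ fun i _ =>
    ((hΦ i).continuous_fderiv one_ne_zero).clm_apply continuous_const

theorem divergence_sub (hΦ : ∀ i, Differentiable ℝ (Φ i)) (hΨ : ∀ i, Differentiable ℝ (Ψ i))
    (x : Fin n → ℝ) :
    divergence (fun i y => Φ i y - Ψ i y) x = divergence Φ x - divergence Ψ x := by
  simp [divergence, fderiv_fun_sub (hΦ _ x) (hΨ _ x), Finset.sum_sub_distrib]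

theorem divergence_add (hΦ : ∀ i, Differentiable ℝ (Φ i)) (hΨ : ∀ i, Differentiable ℝ (Ψ i))
    (x : Fin n → ℝ) :
    divergence (fun i y => Φ i y + Ψ i y) x = divergence Φ x + divergence Ψ x := by
  simp [divergence, fderiv_fun_add (hΦ _ x) (hΨ _ x), Finset.sum_add_distrib]

theorem divergence_const_smul (hΦ : ∀ i, Differentiable ℝ (Φ i)) (c : ℝ) (x : Fin n → ℝ) :
    divergence (fun i y => c • Φ i y) x = c • divergence Φ x := by
  simp [divergence, fderiv_fun_const_smul (hΦ _ x), Finset.smul_sum]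

/-- Opposite faces of the unit cube cancel in the divergence theorem. -/
theorem integral_unitCube_divergence_eq_zero {Φ : Fin (n + 1) → (Fin (n + 1) → ℝ) → E}
    (hΦ : ∀ i, ContDiff ℝ 1 (Φ i)) (hper : ∀ i x, Φ i (x + Pi.single i 1) = Φ i x) :
    ∫ x in Icc 0 1, divergence Φ x = 0 := by
  unfold divergence
  rw [integral_divergence_of_hasFDerivAt_off_countable' 0 1 zero_le_one Φ
    (fun i x => fderiv ℝ (Φ i) x) ∅ countable_empty (fun i => (hΦ i).continuous.continuousOn)
    (fun x _ i => ((hΦ i).differentiable one_ne_zero x).hasFDerivAt)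
    ((continuous_divergence hΦ).integrableOn_Icc)]
  refine Finset.sum_eq_zero fun i _ => sub_eq_zero.2 <| setIntegral_congr_fun measurableSet_Icc
    fun x _ => ?_
  have hface : (Fin.insertNth i (1 : ℝ) x : Fin (n + 1) → ℝ)
      = Fin.insertNth i 0 x + Pi.single i 1 := by
    ext j
    refine Fin.succAboveCases i ?_ (fun _ => ?_) j <;> simp
  simp only [Pi.one_apply, Pi.zero_apply, hface, hper]

theorem setIntegral_unitCube_le_of_le_divergence_add {f s : (Fin (n + 1) → ℝ) → ℝ}
    {Φ : Fin (n + 1) → (Fin (n + 1) → ℝ) → ℝ} (hf : Continuous f) (hs : Continuous s)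
    (hΦ : ∀ i, ContDiff ℝ 1 (Φ i)) (hper : ∀ i x, Φ i (x + Pi.single i 1) = Φ i x)
    (h : ∀ x, f x ≤ divergence Φ x + s x) : ∫ x in Icc 0 1, f x ≤ ∫ x in Icc 0 1, s x := by
  have hdiv := continuous_divergence hΦ
  calc ∫ x in Icc 0 1, f x ≤ ∫ x in Icc 0 1, (divergence Φ x + s x) :=
        setIntegral_mono_on hf.integrableOn_Icc (hdiv.add hs).integrableOn_Icc measurableSet_Icc
          fun x _ => h x
    _ = ∫ x in Icc 0 1, s x := by
        rw [integral_add hdiv.integrableOn_Icc hs.integrableOn_Icc,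
          integral_unitCube_divergence_eq_zero hΦ hper, zero_add]

end Divergence

section Dot

theorem dot_add_left (a b c : V3) : dot (a + b) c = dot a c + dot b c := by
  simp [dot, add_mul, Finset.sum_add_distrib]

theorem dot_sub_left (a b c : V3) : dot (a - b) c = dot a c - dot b c := by
  simp [dot, sub_mul, Finset.sum_sub_distrib]

theorem normSq_nonneg (a : V3) : 0 ≤ normSq a :=
  Finset.sum_nonneg fun _ _ => sq_nonneg _

theorem sq_dot_le (a b : V3) : dot a b ^ 2 ≤ normSq a * normSq b :=
  Finset.sum_mul_sq_le_sq_mul_sq _ _ _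

@[fun_prop]
theorem Continuous.dot {X : Type*} [TopologicalSpace X] {v w : X → V3} (hv : Continuous v)
    (hw : Continuous w) : Continuous fun y => dot (v y) (w y) := by
  unfold _root_.dot
  fun_prop

@[fun_prop]
theorem Continuous.normSq {X : Type*} [TopologicalSpace X] {v : X → V3} (hv : Continuous v) :
    Continuous fun y => normSq (v y) := by
  unfold _root_.normSq
  fun_prop

variable {E : Type*} [NormedAddCommGroup E] [NormedSpace ℝ E] {v w : E → V3}

@[fun_prop]
theorem DifferentiableAt.dot {x : E} (hv : DifferentiableAt ℝ v x)
    (hw : DifferentiableAt ℝ w x) : DifferentiableAt ℝ (fun y => dot (v y) (w y)) x := by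
  unfold _root_.dot
  fun_prop

@[fun_prop]
theorem ContDiff.dot {n : WithTop ℕ∞} (hv : ContDiff ℝ n v) (hw : ContDiff ℝ n w) :
    ContDiff ℝ n fun y => dot (v y) (w y) := by
  unfold _root_.dot
  fun_prop

theorem fderiv_dot {x : E} (hv : DifferentiableAt ℝ v x) (hw : DifferentiableAt ℝ w x) (e : E) :
    fderiv ℝ (fun y => dot (v y) (w y)) x e
      = dot (fderiv ℝ v x e) (w x) + dot (v x) (fderiv ℝ w x e) := by
  have hv' (j : Fin 3) : DifferentiableAt ℝ (fun y => v y j) x := differentiableAt_pi.1 hv j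
  have hw' (j : Fin 3) : DifferentiableAt ℝ (fun y => w y j) x := differentiableAt_pi.1 hw j
  simp only [_root_.dot]
  rw [fderiv_fun_sum fun j _ => (hv' j).fun_mul (hw' j)]
  simp [fderiv_fun_mul (hv' _) (hw' _), fderiv_apply hv, fderiv_apply hw,
    Finset.sum_add_distrib, mul_comm, add_comm]

end Dot

section VectorFields

variable {u v w : V3 → V3}

theorem IsPeriodic.apply_add_single (hu : IsPeriodic u) (i : Fin 3) (x : V3) :
    u (x + Pi.single i 1) = u x := by
  have hcast : (fun j => ((Pi.single i 1 : Fin 3 → ℤ) j : ℝ)) = Pi.single i 1 := by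
    ext j
    simp [Pi.single_apply]
  rw [← hcast, hu]

theorem IsPeriodic.pd (hu : IsPeriodic u) (i : Fin 3) : IsPeriodic (pd u i) := by
  intro x k
  simp only [_root_.pd, ← fderiv_comp_add_right, hu _ k]

theorem IsPeriodic.sub (hu : IsPeriodic u) (hv : IsPeriodic v) :
    IsPeriodic fun y => u y - v y := by
  intro x k
  simp only [hu x k, hv x k]

theorem contDiff_pd {n : WithTop ℕ∞} (hu : ContDiff ℝ (n + 1) u) (i : Fin 3) :
    ContDiff ℝ n (pd u i) :=
  (hu.fderiv_right le_rfl).clm_apply contDiff_const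

theorem pd_sub (hu : Differentiable ℝ u) (hv : Differentiable ℝ v) (i : Fin 3) (x : V3) :
    pd (fun y => u y - v y) i x = pd u i x - pd v i x := by
  simp [pd, fderiv_fun_sub (hu x) (hv x)]

theorem IsDivFree.sub (hu : IsDivFree u) (hv : IsDivFree v) (hud : Differentiable ℝ u)
    (hvd : Differentiable ℝ v) : IsDivFree fun y => u y - v y := by
  intro x
  simp [pd_sub hud hvd, Finset.sum_sub_distrib, hu x, hv x]

theorem conv_sub_conv (hu : Differentiable ℝ u) (hv : Differentiable ℝ v) (x : V3) :
    conv u u x - conv v v x = conv u (fun y => u y - v y) x + conv (fun y => u y - v y) v x := by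
  ext j
  simp only [conv, pd_sub hu hv, Pi.sub_apply, Pi.add_apply, Pi.smul_apply, smul_eq_mul,
    Fin.sum_univ_three]
  ring

theorem continuous_lap (hu : ContDiff ℝ 2 u) : Continuous (lap u) :=
  continuous_finsetSum _ fun i _ =>
    ((contDiff_pd (n := 1) hu i).continuous_fderiv one_ne_zero).clm_apply continuous_const

theorem continuous_conv (hu : Continuous u) (hv : ContDiff ℝ 1 v) : Continuous (conv u v) :=
  continuous_finsetSum _ fun i _ =>
    ((continuous_apply i).comp hu).smul (contDiff_pd (n := 0) hv i).continuous

theorem continuous_gradSq (hu : ContDiff ℝ 1 u) : Continuous (gradSq u) :=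
  continuous_finsetSum _ fun i _ => (contDiff_pd (n := 0) hu i).continuous.normSq

end VectorFields

section Energy

variable {u v w : V3 → V3}

theorem divergence_dot_pd (hw : Differentiable ℝ w) (hpd : ∀ i, Differentiable ℝ (pd w i))
    (x : V3) :
    divergence (fun i y => dot (pd w i y) (w y)) x = dot (lap w x) (w x) + gradSq w x := by
  simp only [divergence, fderiv_dot (hpd _ x) (hw x)]
  simp only [dot, lap, gradSq, normSq, pd, Finset.sum_apply, Fin.sum_univ_three]
  ring

theorem IsDivFree.divergence_mul_dot (hdiv : IsDivFree u) (hu : Differentiable ℝ u)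
    (hv : Differentiable ℝ v) (hw : Differentiable ℝ w) (x : V3) :
    divergence (fun i y => u y i * dot (v y) (w y)) x
      = dot (conv u v x) (w x) + dot (conv u w x) (v x) := by
  have hterm (i : Fin 3) : fderiv ℝ (fun y => u y i * dot (v y) (w y)) x (Pi.single i 1)
      = u x i * (dot (pd v i x) (w x) + dot (v x) (pd w i x)) + pd u i x i * dot (v x) (w x) := by
    rw [fderiv_fun_mul (differentiableAt_pi.1 (hu x) i) ((hv x).dot (hw x))]
    simp [fderiv_dot (hv x) (hw x), fderiv_apply (hu x), pd, mul_comm]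
  have hd := hdiv x
  simp only [divergence, hterm]
  simp only [dot, conv, Finset.sum_apply, Pi.smul_apply, smul_eq_mul, Fin.sum_univ_three] at hd ⊢
  linear_combination (v x 0 * w x 0 + v x 1 * w x 1 + v x 2 * w x 2) * hd

/-- The terms of the energy identity for `w` that integrate to zero over a period are the
divergence of this flux. -/
noncomputable def energyFlux (u v w : V3 → V3) (i : Fin 3) (y : V3) : ℝ :=
  dot (pd w i y) (w y) - ((2 : ℝ)⁻¹ • (u y i * dot (w y) (w y)) + w y i * dot (v y) (w y))

theorem contDiff_energyFlux {n : WithTop ℕ∞} (hu : ContDiff ℝ n u) (hv : ContDiff ℝ n v)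
    (hw : ContDiff ℝ (n + 1) w) (i : Fin 3) : ContDiff ℝ n (energyFlux u v w i) := by
  have := hw.of_le le_self_add
  have := contDiff_pd hw i
  unfold energyFlux
  fun_prop

theorem IsPeriodic.energyFlux (hu : IsPeriodic u) (hv : IsPeriodic v) (hw : IsPeriodic w)
    (i : Fin 3) (x : V3) : energyFlux u v w i (x + Pi.single i 1) = energyFlux u v w i x := by
  simp only [_root_.energyFlux, (hw.pd i).apply_add_single, hu.apply_add_single,
    hv.apply_add_single, hw.apply_add_single]

theorem divergence_energyFlux (hdu : IsDivFree u) (hdw : IsDivFree w) (hu : Differentiable ℝ u)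
    (hv : Differentiable ℝ v) (hw : ContDiff ℝ 2 w) (x : V3) :
    divergence (energyFlux u v w) x = dot (lap w x) (w x) + gradSq w x
      - (dot (conv u w x) (w x) + (dot (conv w v x) (w x) + dot (conv w w x) (v x))) := by
  have hwd : Differentiable ℝ w := hw.differentiable two_ne_zero
  have hpd (i : Fin 3) : Differentiable ℝ (pd w i) :=
    (contDiff_pd (n := 1) hw i).differentiable one_ne_zero
  have hP (i : Fin 3) : Differentiable ℝ fun y => dot (pd w i y) (w y) := by fun_prop
  have hQ (i : Fin 3) : Differentiable ℝ fun y => u y i * dot (w y) (w y) := by fun_prop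
  have hR (i : Fin 3) : Differentiable ℝ fun y => w y i * dot (v y) (w y) := by fun_prop
  have hQ' (i : Fin 3) : Differentiable ℝ fun y => (2 : ℝ)⁻¹ • (u y i * dot (w y) (w y)) := by
    fun_prop
  unfold energyFlux
  rw [divergence_sub hP fun i => (hQ' i).fun_add (hR i), divergence_add hQ' hR,
    divergence_const_smul hQ, divergence_dot_pd hwd hpd, hdu.divergence_mul_dot hu hwd hwd,
    hdw.divergence_mul_dot hwd hv hwd, smul_eq_mul]
  ring

end Energy

theorem gradSq_nonneg (u : V3 → V3) (x : V3) : 0 ≤ gradSq u x :=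
  Finset.sum_nonneg fun _ _ => normSq_nonneg _

theorem normSq_conv_le (u v : V3 → V3) (x : V3) :
    normSq (conv u v x) ≤ normSq (u x) * gradSq v x := by
  calc normSq (conv u v x) = ∑ j : Fin 3, (∑ i : Fin 3, u x i * pd v i x j) ^ 2 := by
        simp [normSq, conv, Finset.sum_apply]
    _ ≤ ∑ j : Fin 3, normSq (u x) * ∑ i : Fin 3, pd v i x j ^ 2 :=
        Finset.sum_le_sum fun j _ => Finset.sum_mul_sq_le_sq_mul_sq _ _ _
    _ = normSq (u x) * gradSq v x := by
        rw [← Finset.mul_sum, Finset.sum_comm]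
        rfl

theorem two_mul_dot_conv_le (u v w : V3 → V3) (x : V3) :
    2 * dot (conv u v x) (w x) ≤ gradSq v x + normSq (u x) * normSq (w x) := by
  have hsq : dot (conv u v x) (w x) ^ 2 ≤ gradSq v x * (normSq (u x) * normSq (w x)) :=
    calc dot (conv u v x) (w x) ^ 2 ≤ normSq (conv u v x) * normSq (w x) := sq_dot_le _ _
      _ ≤ normSq (u x) * gradSq v x * normSq (w x) :=
          mul_le_mul_of_nonneg_right (normSq_conv_le u v x) (normSq_nonneg _)
      _ = gradSq v x * (normSq (u x) * normSq (w x)) := by ring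
  nlinarith [gradSq_nonneg v x, mul_nonneg (normSq_nonneg (u x)) (normSq_nonneg (w x)),
    sq_nonneg (gradSq v x - normSq (u x) * normSq (w x))]

theorem sub_mul_normSq_le_two_mul_dot_taming {g : ℝ → ℝ} {K : ℝ} (hmono : Monotone g)
    (hnonneg : ∀ r, 0 ≤ g r) (hlow : ∀ r, r - K ≤ g r) (a b : V3) :
    (normSq a - K) * normSq (b - a) ≤ 2 * dot (g (normSq b) • b - g (normSq a) • a) (b - a) := by
  have hsplit : 2 * dot (g (normSq b) • b - g (normSq a) • a) (b - a)
      = (g (normSq b) + g (normSq a)) * normSq (b - a)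
        + (g (normSq b) - g (normSq a)) * (normSq b - normSq a) := by
    simp only [dot, normSq, Pi.sub_apply, Pi.smul_apply, smul_eq_mul, Fin.sum_univ_three]
    ring
  have hmonovary : 0 ≤ (g (normSq b) - g (normSq a)) * (normSq b - normSq a) :=
    (hmono.monovary monotone_id).sub_mul_sub_nonneg (normSq a) (normSq b)
  linarith [mul_nonneg (hnonneg (normSq b)) (normSq_nonneg (b - a)),
    mul_le_mul_of_nonneg_right (hlow (normSq a)) (normSq_nonneg (b - a))]

namespace IsTaming

variable {N : ℝ} {g : ℝ → ℝ}

theorem monotone (hg : IsTaming N g) : Monotone g := by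
  obtain ⟨hsmooth, -, -, _, -, hderiv⟩ := hg
  exact monotone_of_deriv_nonneg (hsmooth.differentiable (by simp)) fun r => (hderiv r).1

theorem nonneg (hg : IsTaming N g) (r : ℝ) : 0 ≤ g r := by
  rcases le_total r N with h | h
  · exact (hg.2.1 r h).ge
  · exact (hg.2.1 N le_rfl).ge.trans (hg.monotone h)

theorem sub_le (hg : IsTaming N g) (r : ℝ) : r - (N + 1) ≤ g r := by
  rcases le_total (N + 1) r with h | h
  · rw [hg.2.2.1 r h]
    linarith
  · linarith [hg.nonneg r]

end IsTaming

section TamedDrift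

variable {N : ℝ} {g : ℝ → ℝ} {u₁ u₂ : V3 → V3}

theorem dot_tamedDrift_le (hg : IsTaming N g) (hu₁ : ContDiff ℝ 2 u₁) (hu₂ : ContDiff ℝ 2 u₂)
    (hd₁ : IsDivFree u₁) (hd₂ : IsDivFree u₂) (x : V3) :
    dot (lap (fun y => u₁ y - u₂ y) x - (conv u₁ u₁ x - conv u₂ u₂ x)
        - (g (normSq (u₁ x)) • u₁ x - g (normSq (u₂ x)) • u₂ x)) (u₁ x - u₂ x)
      ≤ divergence (energyFlux u₁ u₂ fun y => u₁ y - u₂ y) x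
        + ((N + 1) * normSq (u₁ x - u₂ x) - gradSq (fun y => u₁ y - u₂ y) x) / 2 := by
  have hu₁d := hu₁.differentiable two_ne_zero
  have hu₂d := hu₂.differentiable two_ne_zero
  rw [divergence_energyFlux hd₁ (hd₁.sub hd₂ hu₁d hu₂d) hu₁d hu₂d (hu₁.sub hu₂),
    conv_sub_conv hu₁d hu₂d]
  have hconv := two_mul_dot_conv_le (fun y => u₁ y - u₂ y) (fun y => u₁ y - u₂ y) u₂ x
  have htame := sub_mul_normSq_le_two_mul_dot_taming hg.monotone hg.nonneg hg.sub_le (u₂ x) (u₁ x)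
  simp only [dot_sub_left, dot_add_left] at htame ⊢
  linarith

theorem integral_dot_tamedDrift_le (hg : IsTaming N g) (hu₁ : ContDiff ℝ 2 u₁)
    (hu₂ : ContDiff ℝ 2 u₂) (hp₁ : IsPeriodic u₁) (hp₂ : IsPeriodic u₂) (hd₁ : IsDivFree u₁)
    (hd₂ : IsDivFree u₂) :
    ∫ x in cube, dot (lap (fun y => u₁ y - u₂ y) x - (conv u₁ u₁ x - conv u₂ u₂ x)
        - (g (normSq (u₁ x)) • u₁ x - g (normSq (u₂ x)) • u₂ x)) (u₁ x - u₂ x)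
      ≤ ((N + 2) * l2sq (fun y => u₁ y - u₂ y) - h1sq (fun y => u₁ y - u₂ y)) / 2 := by
  have hw : ContDiff ℝ 2 fun y => u₁ y - u₂ y := hu₁.sub hu₂
  have hlap := continuous_lap hw
  have hconv₁ := continuous_conv hu₁.continuous (hu₁.of_le one_le_two)
  have hconv₂ := continuous_conv hu₂.continuous (hu₂.of_le one_le_two)
  have hgc := hg.1.continuous
  have hgrad := continuous_gradSq (hw.of_le one_le_two)
  have hnormSq : Continuous fun x => normSq (u₁ x - u₂ x) := by fun_prop
  have hh1 : h1sq (fun y => u₁ y - u₂ y)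
      = l2sq (fun y => u₁ y - u₂ y) + ∫ x in cube, gradSq (fun y => u₁ y - u₂ y) x :=
    integral_add hnormSq.integrableOn_Icc hgrad.integrableOn_Icc
  have henergy := setIntegral_unitCube_le_of_le_divergence_add (by fun_prop)
    (by fun_prop) (contDiff_energyFlux (hu₁.of_le one_le_two) (hu₂.of_le one_le_two) hw)
    (hp₁.energyFlux hp₂ (hp₁.sub hp₂)) (dot_tamedDrift_le hg hu₁ hu₂ hd₁ hd₂)
  rw [integral_div, integral_sub ((hnormSq.const_mul _).integrableOn_Icc) hgrad.integrableOn_Icc,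
    integral_const_mul] at henergy
  refine henergy.trans_eq ?_
  rw [hh1]
  change ((N + 1) * l2sq _ - ∫ x in cube, gradSq _ x) / 2 = _
  ring

end TamedDrift

/-- Local monotonicity of the tamed Navier–Stokes drift in `L²`:
`⟨F(u₁) - F(u₂), u₁ - u₂⟩_{H⁰} ≤ -½‖u₁-u₂‖²_{H¹} + C₀(‖u₂‖_{H¹}‖u₂‖_{H²} + 1)‖u₁-u₂‖²_{L²}`
with a constant `C₀ ≥ 1` depending only on `g_N`. -/
theorem tamed_drift_local_monotonicity (N : ℝ) (gN : ℝ → ℝ) (hg : IsTaming N gN) :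
    ∃ C₀ : ℝ, 1 ≤ C₀ ∧ ∀ u₁ u₂ : V3 → V3,
      ContDiff ℝ (⊤ : ℕ∞) u₁ → IsPeriodic u₁ → IsDivFree u₁ →
      ContDiff ℝ (⊤ : ℕ∞) u₂ → IsPeriodic u₂ → IsDivFree u₂ →
      (∫ x in cube,
          dot (lap (fun y => u₁ y - u₂ y) x - (conv u₁ u₁ x - conv u₂ u₂ x) -
                (gN (normSq (u₁ x)) • u₁ x - gN (normSq (u₂ x)) • u₂ x))
              (u₁ x - u₂ x)) ≤
        -(1/2) * h1sq (fun y => u₁ y - u₂ y) +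
          C₀ * (Real.sqrt (h1sq u₂) * Real.sqrt (h2sq u₂) + 1) *
            l2sq (fun y => u₁ y - u₂ y) := by
  refine ⟨|N| + 1, le_add_of_nonneg_left (abs_nonneg N),
    fun u₁ u₂ hu₁ hp₁ hd₁ hu₂ hp₂ hd₂ => ?_⟩
  have henergy := integral_dot_tamedDrift_le hg (hu₁.of_le (WithTop.coe_le_coe.2 le_top))
    (hu₂.of_le (WithTop.coe_le_coe.2 le_top)) hp₁ hp₂ hd₁ hd₂
  have hl2 : 0 ≤ l2sq (fun y => u₁ y - u₂ y) :=
    setIntegral_nonneg measurableSet_Icc fun x _ => normSq_nonneg _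
  have hS : 0 ≤ √(h1sq u₂) * √(h2sq u₂) := by positivity
  linarith [mul_le_mul_of_nonneg_right (le_abs_self N) hl2, mul_nonneg (abs_nonneg N) hl2,
    mul_nonneg hS hl2, mul_nonneg (mul_nonneg (abs_nonneg N) hS) hl2]
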